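/- Let f be a Boolean network of dimension n and ⟨f⟩ its interval-semantics encoding. For every i ∈ {1,…,n}, (2i, 2i−1) is never a positive edge of G(⟨f⟩). -/

import Mathlib

/-- Asynchronous transition relation of a Boolean network `f`:
`x → y` iff exactly one component `i` differs and `y i = f i x`. -/
def asyncStep {ι : Type} (f : ι → (ι → Bool) → Bool) (x y : ι → Bool) : Prop :=
  ∃ i : ι, x i ≠ y i ∧ (∀ j : ι, j ≠ i → x j = y j) ∧ y i = f i x

/-- Index of the "write" node `2i-1` (0-indexed: `2i`). -/
def wIdx {n : ℕ} (i : Fin n) : Fin (2 * n) := ⟨2 * i.val, by have := i.isLt; omega⟩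

/-- Index of the "read" node `2i` (0-indexed: `2i+1`). -/
def rIdx {n : ℕ} (i : Fin n) : Fin (2 * n) := ⟨2 * i.val + 1, by have := i.isLt; omega⟩

/-- `γ : 𝔹^{2n} → 𝔹^n`, projection on read nodes. -/
def gam {n : ℕ} (z : Fin (2 * n) → Bool) : Fin n → Bool := fun i => z (rIdx i)

/-- `α : 𝔹^n → 𝔹^{2n}`, consistent configuration. -/
def alph {n : ℕ} (x : Fin n → Bool) : Fin (2 * n) → Bool :=
  fun k => x ⟨k.val / 2, by have := k.isLt; omega⟩

/-- Interval-semantics encoding `⟨f⟩` of a Boolean network `f`. -/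
def encode {n : ℕ} (f : Fin n → (Fin n → Bool) → Bool) :
    Fin (2 * n) → (Fin (2 * n) → Bool) → Bool := fun k z =>
  let i : Fin n := ⟨k.val / 2, by have := k.isLt; omega⟩
  if k.val % 2 = 0 then
    (f i (gam z) && (!(z (rIdx i)) || z (wIdx i))) || (!(z (rIdx i)) && z (wIdx i))
  else
    z (wIdx i)

/-- Positive edge `(j,i)` of the influence graph `G(f)`. -/
def posEdge {ι : Type} (f : ι → (ι → Bool) → Bool) (j i : ι) : Prop :=
  ∃ x y : ι → Bool, (∀ k : ι, k ≠ j → x k = y k) ∧ x j = false ∧ y j = true ∧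
    f i x = false ∧ f i y = true

/-- Negative edge `(j,i)` of the influence graph `G(f)`. -/
def negEdge {ι : Type} (f : ι → (ι → Bool) → Bool) (j i : ι) : Prop :=
  ∃ x y : ι → Bool, (∀ k : ι, k ≠ j → x k = y k) ∧ x j = false ∧ y j = true ∧
    f i x = true ∧ f i y = false

/-!
The write node `2i−1` keeps its value when the read node `2i` disagrees with it, and copies
`f_i` otherwise. So with the read bit off it can only be switched on, `⟨f⟩_{2i−1} = f_i ∨ z_{2i−1}`,
and with the read bit on it can only be switched off, `⟨f⟩_{2i−1} = f_i ∧ z_{2i−1}`. Raising the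
read bit thus cannot raise the write node's update: if it is `0` below, the write bit is `0`, and
then it is `0` above as well.
-/

theorem wIdx_ne_rIdx {n : ℕ} (i : Fin n) : wIdx i ≠ rIdx i := by
  simp [wIdx, rIdx, Fin.ext_iff]

theorem encode_wIdx {n : ℕ} (f : Fin n → (Fin n → Bool) → Bool) (i : Fin n)
    (z : Fin (2 * n) → Bool) :
    encode f (wIdx i) z =
      ((f i (gam z) && (!(z (rIdx i)) || z (wIdx i))) || (!(z (rIdx i)) && z (wIdx i))) := by
  have hdiv : 2 * i.val / 2 = i.val := by omega
  simp [encode, wIdx, hdiv]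

theorem encode_wIdx_of_read_false {n : ℕ} (f : Fin n → (Fin n → Bool) → Bool) (i : Fin n)
    {z : Fin (2 * n) → Bool} (hz : z (rIdx i) = false) :
    encode f (wIdx i) z = (f i (gam z) || z (wIdx i)) := by
  rw [encode_wIdx, hz]
  cases f i (gam z) <;> cases z (wIdx i) <;> rfl

theorem encode_wIdx_of_read_true {n : ℕ} (f : Fin n → (Fin n → Bool) → Bool) (i : Fin n)
    {z : Fin (2 * n) → Bool} (hz : z (rIdx i) = true) :
    encode f (wIdx i) z = (f i (gam z) && z (wIdx i)) := by
  rw [encode_wIdx, hz]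
  cases f i (gam z) <;> cases z (wIdx i) <;> rfl

/-- `(2i, 2i−1)` is never a positive edge of `G(⟨f⟩)`. -/
theorem no_pos_read_write {n : ℕ} (f : Fin n → (Fin n → Bool) → Bool) (i : Fin n) :
    ¬ posEdge (encode f) (rIdx i) (wIdx i) := by
  rintro ⟨x, y, hxy, hx, hy, hfx, hfy⟩
  have hwx : x (wIdx i) = false := by
    rw [encode_wIdx_of_read_false f i hx, Bool.or_eq_false_iff] at hfx
    exact hfx.2
  have hwy : y (wIdx i) = false := hxy _ (wIdx_ne_rIdx i) ▸ hwx
  rw [encode_wIdx_of_read_true f i hy, hwy, Bool.and_false] at hfy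
  exact Bool.false_ne_true hfy
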